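/- If there exists a Michael space (a Lindelöf space whose product with the Baire space ℕ^ℕ is not Lindelöf), then every productively Lindelöf Čech-complete space is σ-compact. -/

import Mathlib

/-!
Suppose `X` is not σ-compact. Since `X` is Lindelöf and `βX \ X` is a countable union of compact
sets `Fₙ`, countably many continuous functions on `βX` vanishing on the `Fₙ` have no common zero
on `X`. Together they form `e : βX → ℝ^(ℕ × ℕ)` with `e⁻¹(e(X)) = X`, so `e` maps `X` onto a Gδ,
hence Polish, subspace `R` and pulls compact sets back to compact sets; in particular `R` is not
σ-compact. By Hurewicz's theorem `R` contains a closed copy of the Baire space `ℕ^ℕ`, whose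
preimage `Z` is closed in `X` and maps continuously onto `ℕ^ℕ`. For a Michael space `M`, the closed
subset `Z × M` of the Lindelöf space `X × M` then maps onto `M × ℕ^ℕ`, which would be Lindelöf.
-/

universe u

/-- A space is productively Lindelöf if its product with every Lindelöf space is
Lindelöf. -/
def ProductivelyLindelof (X : Type u) [TopologicalSpace X] : Prop :=
  ∀ (Y : Type u) (_ : TopologicalSpace Y), LindelofSpace Y → LindelofSpace (X × Y)

/-- A Tychonoff space is Čech-complete if its image in its Stone–Čech
compactification is a Gδ set. -/
def CechComplete (X : Type*) [TopologicalSpace X] : Prop :=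
  IsGδ (Set.range (stoneCechUnit : X → StoneCech X))

/-- A Michael space is a Lindelöf regular Hausdorff space whose product with the
Baire space `ℕ → ℕ` is not Lindelöf. -/
def IsMichaelSpace (M : Type u) [TopologicalSpace M] : Prop :=
  T3Space M ∧ LindelofSpace M ∧ ¬ LindelofSpace (M × (ℕ → ℕ))

open Set Topology Filter Metric PiNat

theorem ProductivelyLindelof.lindelofSpace {X : Type u} [TopologicalSpace X]
    (hX : ProductivelyLindelof X) : LindelofSpace X :=
  have := hX PUnit _ inferInstance
  .of_continuous_surjective (f := (Prod.fst : X × PUnit → X)) continuous_fst Prod.fst_surjective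

theorem IsSigmaCompact.union {X : Type*} [TopologicalSpace X] {s t : Set X}
    (hs : IsSigmaCompact s) (ht : IsSigmaCompact t) : IsSigmaCompact (s ∪ t) := by
  rw [union_eq_iUnion]
  exact isSigmaCompact_iUnion _ (Bool.forall_bool.2 ⟨ht, hs⟩)

theorem IsSigmaCompact.inter_isOpen {X : Type*} [TopologicalSpace X] [PerfectlyNormalSpace X]
    {s U : Set X} (hs : IsSigmaCompact s) (hU : IsOpen U) : IsSigmaCompact (U ∩ s) := by
  obtain ⟨V, hVo, hV⟩ := isGδ_iff_eq_iInter_nat.1 hU.isClosed_compl.isGδ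
  obtain ⟨K, hK, rfl⟩ := hs
  have hU' : U = ⋃ n, (V n)ᶜ := by rw [← compl_iInter, ← hV, compl_compl]
  rw [hU', iUnion_inter]
  simp_rw [inter_iUnion]
  exact isSigmaCompact_iUnion _ fun n => isSigmaCompact_iUnion _ fun m =>
    ((hK m).inter_left (hVo n).isClosed_compl).isSigmaCompact

theorem IsGδ.polishSpace {X : Type*} [TopologicalSpace X] [PolishSpace X] {s : Set X}
    (hs : IsGδ s) : PolishSpace s := by
  obtain ⟨U, hUo, rfl⟩ := isGδ_iff_eq_iInter_nat.1 hs
  have (n : ℕ) : PolishSpace (U n) := (hUo n).polishSpace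
  let f : ↥(⋂ n, U n) → Π n, ↥(U n) := fun x n => ⟨x, mem_iInter.1 x.2 n⟩
  have hf : Continuous f := continuous_pi fun n => continuous_subtype_val.subtype_mk _
  have hrange : range f = ⋂ n, {p | (p n : X) = p 0} := by
    ext p
    simp only [mem_range, mem_iInter, mem_ofPred_eq]
    refine ⟨by rintro ⟨x, rfl⟩ n; rfl, fun hp => ?_⟩
    exact ⟨⟨p 0, mem_iInter.2 fun n => hp n ▸ (p n).2⟩, funext fun n => Subtype.ext (hp n).symm⟩
  refine IsClosedEmbedding.polishSpace (f := f) ⟨⟨.of_comp hf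
    ((continuous_apply 0).subtype_val) .subtypeVal, fun x y hxy => Subtype.ext ?_⟩, ?_⟩
  · exact congrArg (fun p => (p 0 : X)) hxy
  · rw [hrange]
    exact isClosed_iInter fun n =>
      isClosed_eq (continuous_apply n).subtype_val (continuous_apply 0).subtype_val

def IsNowhereSigmaCompact {Y : Type*} [TopologicalSpace Y] (P : Set Y) : Prop :=
  ∀ O, IsOpen O → (O ∩ P).Nonempty → ¬ IsSigmaCompact (O ∩ P)

theorem exists_isClosed_nonempty_isNowhereSigmaCompact {Y : Type*} [TopologicalSpace Y]
    [HereditarilyLindelofSpace Y] [PerfectlyNormalSpace Y] (h : ¬ SigmaCompactSpace Y) :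
    ∃ P : Set Y, IsClosed P ∧ P.Nonempty ∧ IsNowhereSigmaCompact P := by
  let U : {U : Set Y // IsOpen U ∧ IsSigmaCompact U} → Set Y := (↑)
  obtain ⟨t, htc, htU⟩ := eq_open_union_countable U fun U => U.2.1
  have hW : IsSigmaCompact (⋃ i, U i) := htU ▸ isSigmaCompact_biUnion htc fun U _ => U.2.2
  refine ⟨(⋃ i, U i)ᶜ, (isOpen_iUnion fun U => U.2.1).isClosed_compl, ?_, ?_⟩
  · refine nonempty_compl.2 fun hWu => h ?_
    exact isSigmaCompact_univ_iff.1 (hWu ▸ hW)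
  · rintro O hO ⟨x, hxO, hxW⟩ hOP
    have hOσ : IsSigmaCompact O := by
      have := hOP.union (hW.inter_isOpen hO)
      rwa [← inter_union_distrib_left, compl_union_self, inter_univ] at this
    exact hxW (mem_iUnion.2 ⟨⟨O, hO, hOσ⟩, hxO⟩)

theorem exists_separated_seq_of_not_totallyBounded {Y : Type*} [PseudoMetricSpace Y] {s : Set Y}
    (h : ¬ TotallyBounded s) :
    ∃ ε > 0, ∃ x : ℕ → Y, (∀ n, x n ∈ s) ∧ Pairwise fun m n => ε ≤ dist (x m) (x n) := by
  simp only [Metric.totallyBounded_iff, not_forall, not_exists, not_and] at h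
  obtain ⟨ε, hε, hnet⟩ := h
  have (t : Set Y) (ht : t.Finite) : ∃ c, c ∈ s ∧ ∀ y ∈ t, ε ≤ dist c y := by
    obtain ⟨c, hcs, hc⟩ := not_subset.1 (hnet t ht)
    simp only [mem_iUnion₂, mem_ball, not_exists, not_lt] at hc
    exact ⟨c, hcs, hc⟩
  obtain ⟨x, hx⟩ := seq_of_forall_finite_exists this
  refine ⟨ε, hε, x, fun n => (hx n).1, fun m n hmn => ?_⟩
  rcases hmn.lt_or_gt with h | h
  · rw [dist_comm]; exact (hx n).2 _ (mem_image_of_mem x h)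
  · exact (hx m).2 _ (mem_image_of_mem x h)

theorem IsNowhereSigmaCompact.exists_separated_seq_isOpen {Y : Type*} [PseudoMetricSpace Y]
    [CompleteSpace Y] {P : Set Y} (hP : IsNowhereSigmaCompact P) (hPc : IsClosed P) {O : Set Y} (hO : IsOpen O) (hOP : (O ∩ P).Nonempty) {δ : ℝ} (hδ : 0 < δ) :
    ∃ U : ℕ → Set Y, (∀ n, IsOpen (U n) ∧ (U n ∩ P).Nonempty) ∧
      (∀ n, closure (U n) ⊆ O ∧ ediam (U n) ≤ ENNReal.ofReal δ) ∧
      ∃ ε > 0, Pairwise fun m n => ∀ y ∈ U m, ∀ z ∈ U n, ε ≤ dist y z := by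
  obtain ⟨x₀, hx₀O, hx₀P⟩ := hOP
  obtain ⟨r, hr, hball⟩ := isOpen_iff.1 hO x₀ hx₀O
  have hnb : ¬ TotallyBounded (ball x₀ (r / 2) ∩ P) := fun htb => by
    refine hP _ isOpen_ball ⟨x₀, mem_ball_self (half_pos hr), hx₀P⟩ ?_
    have hK := (htb.closure.isCompact_of_isClosed isClosed_closure).inter_right hPc
    have heq : ball x₀ (r / 2) ∩ (closure (ball x₀ (r / 2) ∩ P) ∩ P) = ball x₀ (r / 2) ∩ P := by
      ext y
      exact ⟨fun ⟨hy, _, hyP⟩ => ⟨hy, hyP⟩, fun h => ⟨h.1, subset_closure h, h.2⟩⟩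
    exact heq ▸ hK.isSigmaCompact.inter_isOpen isOpen_ball
  obtain ⟨ε, hε, x, hx, hsep⟩ := exists_separated_seq_of_not_totallyBounded hnb
  set ρ := min (ε / 4) (min (r / 2) (δ / 2))
  have hρ : 0 < ρ := by positivity
  have hρε : ρ ≤ ε / 4 := min_le_left _ _
  have hρr : ρ ≤ r / 2 := (min_le_right _ _).trans (min_le_left _ _)
  have hρδ : ρ ≤ δ / 2 := (min_le_right _ _).trans (min_le_right _ _)
  refine ⟨fun n => ball (x n) ρ, fun n => ⟨isOpen_ball, x n, mem_ball_self hρ, (hx n).2⟩,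
    fun n => ⟨?_, ?_⟩, ε / 2, half_pos hε, fun m n hmn y hy z hz => ?_⟩
  · refine closure_ball_subset_closedBall.trans fun y hy => hball ?_
    have := mem_ball.1 (hx n).1
    have := dist_triangle y (x n) x₀
    rw [mem_closedBall] at hy
    rw [mem_ball]
    linarith
  · refine ediam_le_of_forall_dist_le fun y hy z hz => ?_
    have := dist_triangle_right y z (x n)
    rw [mem_ball] at hy hz
    linarith
  · have := hsep hmn
    have := dist_triangle4 (x m) y z (x n)
    rw [mem_ball'] at hy
    rw [mem_ball] at hz
    linarith

/-- Lists are reversed prefixes, as in `PiNat.res`: `A (b :: l)` is the `b`-th child of `A l`. -/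
theorem exists_scheme_of_forall_exists_children {β α : Type*} (p : Set α → Prop)
    (R : ℕ → Set α → (β → Set α) → Prop)
    (h : ∀ k O, p O → ∃ U : β → Set α, (∀ b, p (U b)) ∧ R k O U) {O₀ : Set α} (h₀ : p O₀) :
    ∃ A : List β → Set α, (∀ l, p (A l)) ∧ ∀ l, R l.length (A l) fun b => A (b :: l) := by
  choose U hU hR using h
  let B : List β → {O // p O} := fun l =>
    l.rec ⟨O₀, h₀⟩ fun b l B => ⟨U l.length B.1 B.2 b, hU _ _ _ b⟩
  exact ⟨fun l => (B l).1, fun l => (B l).2, fun l => hR l.length (B l).1 (B l).2⟩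

namespace CantorScheme

variable {β α : Type*} {A : List β → Set α}

theorem exists_continuous_forall_mem [PseudoMetricSpace α] [CompleteSpace α] [TopologicalSpace β]
    [DiscreteTopology β] (hanti : ClosureAntitone A) (hdiam : VanishingDiam A)
    (hne : ∀ l, (A l).Nonempty) :
    ∃ f : (ℕ → β) → α, Continuous f ∧ ∀ x n, f x ∈ A (res x n) := by
  have hdom := hanti.map_of_vanishingDiam hdiam hne
  refine ⟨fun x => (inducedMap A).2 ⟨x, hdom ▸ mem_univ x⟩,
    hdiam.map_continuous.comp (continuous_id.subtype_mk _), fun x n => map_mem _ n⟩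

section PseudoMetricSpace

variable [PseudoMetricSpace α]

def UniformlyDisjoint (A : List β → Set α) : Prop :=
  ∀ l, ∃ ε > 0, Pairwise fun a b => ∀ x ∈ A (a :: l), ∀ y ∈ A (b :: l), ε ≤ dist x y

variable {f : (ℕ → β) → α}

theorem UniformlyDisjoint.exists_res_eq (hA : UniformlyDisjoint A)
    (hf : ∀ x n, f x ∈ A (res x n)) (y : α) (k : ℕ) :
    ∃ r > 0, ∀ x x', dist (f x) y < r → dist (f x') y < r → res x k = res x' k := by
  -- All branches landing near `y` follow a fixed such branch `x₀` up to level `k`, so the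
  -- separation constant of the node `res x₀ k` serves for all of them at level `k + 1`.
  induction k with
  | zero => exact ⟨1, one_pos, fun _ _ _ _ => rfl⟩
  | succ k ih =>
    obtain ⟨r, hr, hres⟩ := ih
    by_cases hnear : ∃ x₀, dist (f x₀) y < r
    swap
    · exact ⟨r, hr, fun x _ hx => (hnear ⟨x, hx⟩).elim⟩
    obtain ⟨x₀, hx₀⟩ := hnear
    obtain ⟨ε, hε, hsep⟩ := hA (res x₀ k)
    refine ⟨min r (ε / 2), by positivity, fun x x' hx hx' => ?_⟩
    have hxk := hres x x₀ (hx.trans_le (min_le_left _ _)) hx₀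
    have hx'k := hres x' x₀ (hx'.trans_le (min_le_left _ _)) hx₀
    rw [res_succ, res_succ, hxk, hx'k]
    congr 1
    by_contra hne
    have hfx : f x ∈ A (x k :: res x₀ k) := hxk ▸ hf x (k + 1)
    have hfx' : f x' ∈ A (x' k :: res x₀ k) := hx'k ▸ hf x' (k + 1)
    have := hsep hne _ hfx _ hfx'
    have := dist_triangle_right (f x) (f x') y
    have := min_le_right r (ε / 2)
    linarith

theorem UniformlyDisjoint.exists_tendsto [TopologicalSpace β] (hA : UniformlyDisjoint A)
    (hf : ∀ x n, f x ∈ A (res x n)) {u : ℕ → ℕ → β} {y : α}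
    (hu : Tendsto (f ∘ u) atTop (𝓝 y)) : ∃ x, Tendsto u atTop (𝓝 x) := by
  have (k : ℕ) : ∃ b, ∀ᶠ j in atTop, u j k = b := by
    obtain ⟨r, hr, hres⟩ := hA.exists_res_eq hf y (k + 1)
    obtain ⟨J, hJ⟩ := eventually_atTop.1 (Metric.tendsto_nhds.1 hu r hr)
    refine ⟨u J k, eventually_atTop.2 ⟨J, fun j hj => ?_⟩⟩
    have := hres (u j) (u J) (hJ j hj) (hJ J le_rfl)
    rw [res_succ, res_succ, List.cons.injEq] at this
    exact this.1
  choose x hx using this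
  exact ⟨x, tendsto_pi_nhds.2 fun k => tendsto_nhds_of_eventually_eq (hx k)⟩

end PseudoMetricSpace

theorem UniformlyDisjoint.isClosedEmbedding [MetricSpace α] [TopologicalSpace β]
    {f : (ℕ → β) → α} (hA : UniformlyDisjoint A) (hf : ∀ x n, f x ∈ A (res x n))
    (hfc : Continuous f) : IsClosedEmbedding f := by
  refine .of_continuous_injective_isClosedMap hfc (fun x x' hxx' => res_injective ?_) ?_
  · funext k
    obtain ⟨r, hr, hres⟩ := hA.exists_res_eq hf (f x) k
    exact hres x x' (by simpa) (by simpa [hxx'])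
  · intro C hC
    refine IsSeqClosed.isClosed fun v y hv hvy => ?_
    choose u huC hfu using hv
    obtain ⟨x, hx⟩ := hA.exists_tendsto hf (u := u) (y := y) (by simpa [Function.comp_def, hfu])
    refine ⟨x, hC.mem_of_tendsto hx (Eventually.of_forall huC), tendsto_nhds_unique ?_ hvy⟩
    simpa [Function.comp_def, hfu] using (hfc.tendsto x).comp hx

end CantorScheme

open CantorScheme in
/-- Hurewicz: the points without σ-compact neighbourhood form a nonempty closed nowhere σ-compact
set `P`; a scheme of open sets meeting `P`, with vanishing diameters and uniformly separated
children, induces a closed embedding of the Baire space. -/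
theorem exists_nat_nat_isClosedEmbedding_of_not_sigmaCompactSpace {Y : Type*}
    [TopologicalSpace Y] [PolishSpace Y] (h : ¬ SigmaCompactSpace Y) :
    ∃ f : (ℕ → ℕ) → Y, IsClosedEmbedding f := by
  let := TopologicalSpace.upgradeIsCompletelyMetrizable Y
  obtain ⟨P, hPc, hPne, hP⟩ := exists_isClosed_nonempty_isNowhereSigmaCompact h
  obtain ⟨A, hAP, hAchildren⟩ := exists_scheme_of_forall_exists_children
    (fun O => IsOpen O ∧ (O ∩ P).Nonempty)
    (fun k O U => (∀ n, closure (U n) ⊆ O ∧ ediam (U n) ≤ ENNReal.ofReal ((1 / 2) ^ k)) ∧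
      ∃ ε > 0, Pairwise fun m n => ∀ y ∈ U m, ∀ z ∈ U n, ε ≤ dist y z)
    (fun k O hO => hP.exists_separated_seq_isOpen hPc hO.1 hO.2 (by positivity))
    (O₀ := univ) ⟨isOpen_univ, by rwa [univ_inter]⟩
  have hanti : ClosureAntitone A := fun l a => ((hAchildren l).1 a).1
  have hdiam : VanishingDiam A := fun x => by
    have hδ : Tendsto (fun n : ℕ => ENNReal.ofReal ((1 / 2 : ℝ) ^ n)) atTop (𝓝 0) := by
      simpa using ENNReal.tendsto_ofReal
        (tendsto_pow_atTop_nhds_zero_of_lt_one (r := (1 / 2 : ℝ)) (by norm_num) (by norm_num))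
    rw [← tendsto_add_atTop_iff_nat 1]
    refine tendsto_of_tendsto_of_tendsto_of_le_of_le tendsto_const_nhds hδ (fun _ => bot_le)
      fun n => ?_
    simpa only [res_succ, res_length] using ((hAchildren (res x n)).1 (x n)).2
  obtain ⟨f, hfc, hfA⟩ :=
    exists_continuous_forall_mem hanti hdiam fun l => (hAP l).2.mono inter_subset_left
  exact ⟨f, UniformlyDisjoint.isClosedEmbedding (fun l => (hAchildren l).2) hfA hfc⟩

section CompletelyRegular

variable {Z : Type*} [TopologicalSpace Z] [CompletelyRegularSpace Z]

theorem IsLindelof.exists_seq_continuous_ne_zero {A G : Set Z} (hA : IsLindelof A)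
    (hG : IsOpen G) (hAG : A ⊆ G) :
    ∃ F : ℕ → Z → ℝ, (∀ n, Continuous (F n)) ∧ (∀ n, ∀ z ∉ G, F n z = 0) ∧
      ∀ a ∈ A, ∃ n, F n a ≠ 0 := by
  rcases A.eq_empty_or_nonempty with rfl | ⟨a₀, ha₀⟩
  · exact ⟨0, fun _ => continuous_const, fun _ _ _ => rfl, fun _ h => h.elim⟩
  have (g : G) : ∃ f : Z → ℝ, Continuous f ∧ (∀ z ∉ G, f z = 0) ∧ f g ≠ 0 := by
    obtain ⟨f, hfc, hfg, hf1⟩ := CompletelyRegularSpace.completely_regular (g : Z) Gᶜ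
      hG.isClosed_compl (not_not.2 g.2)
    refine ⟨fun z => 1 - f z, continuous_const.sub (continuous_subtype_val.comp hfc),
      fun z hz => ?_, by simp [hfg]⟩
    simp [hf1 hz]
  choose f hfc hf0 hfg using this
  have : Nonempty G := ⟨⟨a₀, hAG ha₀⟩⟩
  obtain ⟨k, hk⟩ := hA.indexed_countable_subcover (fun g => {z | f g z ≠ 0})
    (fun g => isOpen_ne_fun (hfc g) continuous_const)
    fun a ha => mem_iUnion.2 ⟨⟨a, hAG ha⟩, hfg _⟩
  exact ⟨fun n => f (k n), fun n => hfc _, fun n => hf0 _, fun a ha => mem_iUnion.1 (hk ha)⟩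

theorem IsLindelof.exists_continuous_preimage_image_subset {A : Set Z} (hAL : IsLindelof A)
    (hAG : IsGδ A) : ∃ e : Z → (ℕ × ℕ → ℝ), Continuous e ∧ e ⁻¹' (e '' A) ⊆ A := by
  obtain ⟨G, hGo, rfl⟩ := isGδ_iff_eq_iInter_nat.1 hAG
  choose F hFc hF0 hFA using fun n => hAL.exists_seq_continuous_ne_zero (hGo n) (iInter_subset _ n)
  refine ⟨fun z p => F p.1 p.2 z, continuous_pi fun p => hFc p.1 p.2, ?_⟩
  rintro z ⟨a, ha, hza⟩
  refine mem_iInter.2 fun n => ?_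
  obtain ⟨k, hk⟩ := hFA n a ha
  by_contra hz
  exact hk (by simpa [hF0 n k z hz] using congrFun hza (n, k))

end CompletelyRegular

section Saturated

variable {Z Y : Type*} [TopologicalSpace Z] [CompactSpace Z] [TopologicalSpace Y] [T2Space Y]
  {e : Z → Y}

theorem IsGδ.image_of_preimage_image_subset [PerfectlyNormalSpace Y] (he : Continuous e)
    {A : Set Z} (hA : IsGδ A) (hsat : e ⁻¹' (e '' A) ⊆ A) : IsGδ (e '' A) := by
  obtain ⟨G, hGo, rfl⟩ := isGδ_iff_eq_iInter_nat.1 hA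
  have himage : e '' ⋂ n, G n = range e ∩ ⋂ n, (e '' (G n)ᶜ)ᶜ := by
    refine subset_antisymm (fun y hy => ⟨image_subset_range _ _ hy, mem_iInter.2 fun n => ?_⟩) ?_
    · rintro _ ⟨⟨z, rfl⟩, hz⟩
      exact mem_image_of_mem e (mem_iInter.2 fun n => not_not.1 fun hzn =>
        mem_iInter.1 hz n (mem_image_of_mem e hzn))
    · rintro ⟨z, hz, rfl⟩
      exact hz (mem_iInter.1 (hsat hy) n)
  rw [himage]
  exact (isCompact_range he).isClosed.isGδ.inter <| .iInter_of_isOpen fun n =>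
    ((hGo n).isClosed_compl.isCompact.image he).isClosed.isOpen_compl

theorem sigmaCompactSpace_of_preimage_image_subset {X : Type*} [TopologicalSpace X] {ι : X → Z}
    (hι : IsEmbedding ι) (he : Continuous e) (hsat : e ⁻¹' (e '' range ι) ⊆ range ι)
    (hR : SigmaCompactSpace (e '' range ι)) : SigmaCompactSpace X := by
  obtain ⟨K, hK, hKR⟩ := isSigmaCompact_iff_sigmaCompactSpace.2 hR
  refine isSigmaCompact_univ_iff.1 ⟨fun n => ι ⁻¹' (e ⁻¹' K n), fun n => ?_, ?_⟩
  · have hsub : e ⁻¹' K n ⊆ range ι := (preimage_mono (hKR ▸ subset_iUnion K n)).trans hsat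
    exact (hι.isInducing.isCompact_preimage_iff hsub).2 ((hK n).isClosed.preimage he).isCompact
  · refine eq_univ_of_forall fun x => ?_
    have hx : e (ι x) ∈ ⋃ n, K n := hKR ▸ mem_image_of_mem e (mem_range_self x)
    simpa only [mem_iUnion, mem_preimage] using hx

end Saturated

theorem lindelofSpace_prod_of_isClosedEmbedding {X M Y B : Type*} [TopologicalSpace X]
    [TopologicalSpace M] [TopologicalSpace Y] [TopologicalSpace B] [LindelofSpace (X × M)]
    {φ : X → Y} (hφ : Continuous φ) (hφs : Function.Surjective φ) {f : B → Y}
    (hf : IsClosedEmbedding f) : LindelofSpace (M × B) := by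
  let Z := φ ⁻¹' range f
  have : LindelofSpace (Z × M) :=
    ((hf.isClosed_range.preimage hφ).isClosedEmbedding_subtypeVal.prodMap
      IsClosedEmbedding.id).LindelofSpace
  let g : Z → B := fun z => hf.isEmbedding.toHomeomorph.symm ⟨φ z, z.2⟩
  have hg : Continuous g :=
    hf.isEmbedding.toHomeomorph.symm.continuous.comp ((hφ.comp continuous_subtype_val).subtype_mk _)
  refine LindelofSpace.of_continuous_surjective (f := fun p : Z × M => (p.2, g p.1))
    (continuous_snd.prodMk (hg.comp continuous_fst)) ?_
  rintro ⟨m, b⟩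
  obtain ⟨x, hx⟩ := hφs (f b)
  refine ⟨(⟨x, b, hx.symm⟩, m), ?_⟩
  simp only [g, hx, hf.isEmbedding.toHomeomorph_symm_apply]

/-- If there is a Michael space, then every productively Lindelöf Čech-complete
(Tychonoff) space is σ-compact. -/
theorem michael_productivelyLindelof_cechComplete_sigmaCompact
    (hMichael : ∃ (M : Type u) (_ : TopologicalSpace M), IsMichaelSpace M)
    (X : Type u) [TopologicalSpace X] [T35Space X]
    (hCech : CechComplete X) (hProd : ProductivelyLindelof X) :
    SigmaCompactSpace X := by
  obtain ⟨M, _, -, hML, hMB⟩ := hMichael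
  have : LindelofSpace (X × M) := hProd M _ hML
  have : LindelofSpace X := hProd.lindelofSpace
  obtain ⟨e, he, hsat⟩ :=
    (isLindelof_range continuous_stoneCechUnit).exists_continuous_preimage_image_subset hCech
  let R := e '' range (stoneCechUnit : X → StoneCech X)
  by_contra hX
  have hR : ¬ SigmaCompactSpace R := fun hR =>
    hX (sigmaCompactSpace_of_preimage_image_subset isEmbedding_stoneCechUnit he hsat hR)
  have : PolishSpace R := (hCech.image_of_preimage_image_subset he hsat).polishSpace
  obtain ⟨f, hf⟩ := exists_nat_nat_isClosedEmbedding_of_not_sigmaCompactSpace hR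
  let φ : X → R := fun x => ⟨e (stoneCechUnit x), mem_image_of_mem e (mem_range_self x)⟩
  refine hMB (lindelofSpace_prod_of_isClosedEmbedding (φ := φ)
    ((he.comp continuous_stoneCechUnit).subtype_mk _) ?_ hf)
  rintro ⟨_, _, ⟨x, rfl⟩, rfl⟩
  exact ⟨x, rfl⟩
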